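/- arXiv:2101.12005 — 5 statements merged into one kernel-verified Lean document; each statement's English description precedes it below -/
import Mathlib

section
/- Let n be odd, n ≥ 5, and let I_h^{2h} = (I_{2h}^h)^T be the transpose of the linear interpolation matrix. Then for 1 ≤ k ≤ (n−3)/2, I_h^{2h} v_k^h = 2 cos²(kπ/(2(n−1))) v_k^{2h}. -/
open Real Matrix

/-- 1D discrete Laplacian `(1/h^2) tridiag(-1,2,-1)` with `h = 1/(n-1)`. -/
noncomputable def lap (n : ℕ) : Matrix (Fin (n-2)) (Fin (n-2)) ℝ :=
  Matrix.of fun i j =>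
    ((n : ℝ) - 1)^2 *
      (if i = j then 2 else if i.val + 1 = j.val ∨ j.val + 1 = i.val then -1 else 0)

/-- Fine-grid Fourier mode `v_k(j) = sin (j k π/(n-1))`, `j = 1, …, n-2`. -/
noncomputable def vmode (n k : ℕ) : Fin (n-2) → ℝ :=
  fun j => Real.sin ((j.val + 1) * k * Real.pi / ((n : ℝ) - 1))

/-- Eigenvalue `λ_k = (4/h²) sin²(kπ/(2(n-1)))`. -/
noncomputable def lamk (n k : ℕ) : ℝ :=
  4 * ((n : ℝ) - 1)^2 * Real.sin (k * Real.pi / (2 * ((n : ℝ) - 1)))^2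

/-- Angle `kπh/2 = kπ/(2(n-1))`. -/
noncomputable def theta (n k : ℕ) : ℝ := k * Real.pi / (2 * ((n : ℝ) - 1))

/-- Linear interpolation (prolongation) matrix: column `j` has entries
`1/2, 1, 1/2` in rows `2j-1, 2j, 2j+1` (1-based indexing). -/
noncomputable def interp (n : ℕ) : Matrix (Fin (n-2)) (Fin ((n-3)/2)) ℝ :=
  Matrix.of fun i j =>
    if i.val + 1 = 2 * j.val + 1 then 1/2
    else if i.val + 1 = 2 * j.val + 2 then 1
    else if i.val + 1 = 2 * j.val + 3 then 1/2 else 0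

/-- Coarse-grid Fourier mode `v_k^{2h}(j) = sin (2 j k π/(n-1))`. -/
noncomputable def vcoarse (n k : ℕ) : Fin ((n-3)/2) → ℝ :=
  fun j => Real.sin (2 * (j.val + 1) * k * Real.pi / ((n : ℝ) - 1))

/-- Galerkin coarse-grid matrix `A^{2h} = I_h^{2h} A^h I_{2h}^h`. -/
noncomputable def coarseA (n : ℕ) : Matrix (Fin ((n-3)/2)) (Fin ((n-3)/2)) ℝ :=
  (interp n)ᵀ * lap n * interp n

/-- Weighted-Jacobi iteration matrix `R_J^ω = I - ω D⁻¹ A` where `D = diag A`. -/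
noncomputable def jacobi (n : ℕ) (ω : ℝ) : Matrix (Fin (n-2)) (Fin (n-2)) ℝ :=
  1 - ω • ((Matrix.diagonal fun i => lap n i i)⁻¹ * lap n)

/-- Two-grid iteration matrix with pre-smoother `S`. -/
noncomputable def twogrid (n : ℕ) (S : Matrix (Fin (n-2)) (Fin (n-2)) ℝ) :
    Matrix (Fin (n-2)) (Fin (n-2)) ℝ :=
  (1 - interp n * (coarseA n)⁻¹ * (interp n)ᵀ * lap n) * S


lemma tri_aux (t y : ℝ) :
    Real.sin (y - 2*t)/2 + Real.sin y + Real.sin (y + 2*t)/2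
      = 2 * Real.cos t ^ 2 * Real.sin y := by
  rw [Real.sin_sub, Real.sin_add, Real.cos_sq]
  ring

theorem restrict_on_smooth_mode (n : ℕ) (hodd : Odd n) (hn : 5 ≤ n)
    (k : ℕ) (hk1 : 1 ≤ k) (hk2 : k ≤ (n-3)/2) :
    ((interp n)ᵀ).mulVec (vmode n k) = (2 * Real.cos (theta n k) ^ 2) • vcoarse n k := by
  obtain ⟨m, hm⟩ := hodd
  funext j
  have hj : j.val < (n-3)/2 := j.2
  have hb : 2 * j.val + 2 < n - 2 := by omega
  set i0 : Fin (n-2) := ⟨2*j.val, by omega⟩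
  set i1 : Fin (n-2) := ⟨2*j.val+1, by omega⟩
  set i2 : Fin (n-2) := ⟨2*j.val+2, by omega⟩
  have key : (((interp n)ᵀ).mulVec (vmode n k)) j
      = ∑ i ∈ ({i0, i1, i2} : Finset (Fin (n-2))), interp n i j * vmode n k i := by
    rw [Matrix.mulVec, dotProduct]
    rw [← Finset.sum_subset (Finset.subset_univ ({i0,i1,i2} : Finset (Fin (n-2))))]
    · apply Finset.sum_congr rfl
      intro i _
      simp [Matrix.transpose_apply]
    · intro i _ hi
      simp only [Finset.mem_insert, Finset.mem_singleton] at hi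
      push_neg at hi
      obtain ⟨h0, h1, h2⟩ := hi
      have e0 : i.val ≠ 2*j.val := fun h => h0 (Fin.ext h)
      have e1 : i.val ≠ 2*j.val+1 := fun h => h1 (Fin.ext h)
      have e2 : i.val ≠ 2*j.val+2 := fun h => h2 (Fin.ext h)
      have : interp n i j = 0 := by
        simp only [interp, Matrix.of_apply]
        rw [if_neg (by omega), if_neg (by omega), if_neg (by omega)]
      simp [Matrix.transpose_apply, this]
  rw [key]
  have d01 : i0 ≠ i1 := by simp [i0, i1, Fin.ext_iff]
  have d02 : i0 ≠ i2 := by simp [i0, i2, Fin.ext_iff]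
  have d12 : i1 ≠ i2 := by simp [i1, i2, Fin.ext_iff]
  rw [Finset.sum_insert (by simp [d01, d02]),
      Finset.sum_insert (by simp [d12]), Finset.sum_singleton]
  have v0 : interp n i0 j = 1/2 := by
    simp only [interp, Matrix.of_apply, i0]; norm_num
  have v1 : interp n i1 j = 1 := by
    simp only [interp, Matrix.of_apply, i1]
    rw [if_neg (by omega)]; norm_num
  have v2 : interp n i2 j = 1/2 := by
    simp only [interp, Matrix.of_apply, i2]
    rw [if_neg (by omega), if_neg (by omega)]; norm_num
  rw [v0, v1, v2]
  simp only [vmode, vcoarse, Pi.smul_apply, smul_eq_mul, i0, i1, i2]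
  have hc : ((n:ℝ) - 1) ≠ 0 := by
    have : (5:ℝ) ≤ (n:ℝ) := by exact_mod_cast hn
    linarith
  set y : ℝ := 2 * ((j.val : ℝ) + 1) * k * Real.pi / ((n:ℝ) - 1) with hy
  have ht : 2 * theta n k = (k:ℝ) * Real.pi / ((n:ℝ) - 1) := by
    rw [theta, ← mul_div_assoc, mul_div_mul_left _ _ (two_ne_zero)]
  have a0 : ((i0.val : ℝ) + 1) * k * Real.pi / ((n:ℝ) - 1) = y - 2 * theta n k := by
    rw [ht, hy, div_sub_div_same]
    congr 1
    simp only [i0]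
    push_cast
    ring
  have a1 : ((i1.val : ℝ) + 1) * k * Real.pi / ((n:ℝ) - 1) = y := by
    simp only [i1]
    push_cast
    ring
  have a2 : ((i2.val : ℝ) + 1) * k * Real.pi / ((n:ℝ) - 1) = y + 2 * theta n k := by
    rw [ht, hy, ← add_div]
    congr 1
    simp only [i2]
    push_cast
    ring
  rw [a0, a1, a2]
  have := tri_aux (theta n k) y
  linarith
end

section
/- Let n be odd, n ≥ 5, and let I_h^{2h} = (I_{2h}^h)^T. Then for 1 ≤ k ≤ (n−3)/2, I_h^{2h} v_{n−1−k}^h = −2 sin²(kπ/(2(n−1))) v_k^{2h}. -/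
open Real Matrix

lemma cos_nat_mul_pi' (ℓ : ℕ) : Real.cos ((ℓ:ℝ) * Real.pi) = (-1)^ℓ := by
  induction ℓ with
  | zero => simp
  | succ m ih =>
      have : ((m+1 : ℕ):ℝ) * Real.pi = (m:ℝ)*Real.pi + Real.pi := by push_cast; ring
      rw [this, Real.cos_add_pi, ih, pow_succ]; ring

lemma sin_nat_pi_sub' (ℓ : ℕ) (t : ℝ) :
    Real.sin ((ℓ:ℝ) * Real.pi - t) = -((-1)^ℓ * Real.sin t) := by
  rw [Real.sin_sub, Real.sin_nat_mul_pi, cos_nat_mul_pi']; ring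

theorem restrict_on_oscillatory_mode (n : ℕ) (hodd : Odd n) (hn : 5 ≤ n)
    (k : ℕ) (hk1 : 1 ≤ k) (hk2 : k ≤ (n-3)/2) :
    ((interp n)ᵀ).mulVec (vmode n (n-1-k)) = (-2 * Real.sin (theta n k) ^ 2) • vcoarse n k := by
  funext j
  have hj := j.isLt
  have hA : 2*j.val < n - 2 := by omega
  have hB : 2*j.val+1 < n - 2 := by omega
  have hC : 2*j.val+2 < n - 2 := by omega
  set A : Fin (n-2) := ⟨2*j.val, hA⟩
  set B : Fin (n-2) := ⟨2*j.val+1, hB⟩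
  set C : Fin (n-2) := ⟨2*j.val+2, hC⟩
  have hsum : ((interp n)ᵀ.mulVec (vmode n (n-1-k))) j =
      (1/2) * vmode n (n-1-k) A + vmode n (n-1-k) B + (1/2) * vmode n (n-1-k) C := by
    have hterm : ∀ i : Fin (n-2), (interp n)ᵀ j i * vmode n (n-1-k) i =
        ((if i = A then (1/2) * vmode n (n-1-k) A else 0) +
         (if i = B then vmode n (n-1-k) B else 0)) +
        (if i = C then (1/2) * vmode n (n-1-k) C else 0) := by
      intro i
      simp only [Matrix.transpose_apply, interp, Matrix.of_apply]
      rcases eq_or_ne i A with rfl | h1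
      · simp [A, B, C, Fin.ext_iff]
      · rcases eq_or_ne i B with rfl | h2
        · simp [A, B, C, Fin.ext_iff]
        · rcases eq_or_ne i C with rfl | h3
          · simp [A, B, C, Fin.ext_iff]
          · have h1' : ¬ (i.val + 1 = 2*j.val + 1) := fun h => h1 (Fin.ext (show i.val = 2*j.val by omega))
            have h2' : ¬ (i.val + 1 = 2*j.val + 2) := fun h => h2 (Fin.ext (show i.val = 2*j.val+1 by omega))
            have h3' : ¬ (i.val + 1 = 2*j.val + 3) := fun h => h3 (Fin.ext (show i.val = 2*j.val+2 by omega))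
            rw [if_neg h1', if_neg h2', if_neg h3', if_neg h1, if_neg h2, if_neg h3]
            ring
    rw [Matrix.mulVec, dotProduct]
    simp only [hterm]
    rw [Finset.sum_add_distrib, Finset.sum_add_distrib]
    simp
  rw [hsum]
  have hNpos : (4:ℝ) ≤ (n:ℝ) - 1 := by
    have : (5:ℝ) ≤ (n:ℝ) := by exact_mod_cast hn
    linarith
  have hN : ((n:ℝ) - 1) ≠ 0 := by linarith
  have hcast : ((n-1-k : ℕ):ℝ) = (n:ℝ) - 1 - (k:ℝ) := by
    have hkn : k ≤ n - 1 := by omega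
    rw [Nat.cast_sub hkn, Nat.cast_sub (by omega)]
    norm_num
  set a : ℝ := (k:ℝ) * Real.pi / ((n:ℝ) - 1) with hadef
  have harg : ∀ ℓ : ℕ, ((ℓ:ℝ)) * ((n:ℝ) - 1 - (k:ℝ)) * Real.pi / ((n:ℝ)-1)
      = (ℓ:ℝ) * Real.pi - (ℓ:ℝ) * a := by
    intro ℓ
    rw [hadef]; field_simp
  have hvm : ∀ (m : ℕ) (h : m < n - 2),
      vmode n (n-1-k) ⟨m, h⟩ = -((-1)^(m+1) * Real.sin (((m:ℝ)+1) * a)) := by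
    intro m h
    show Real.sin (((m:ℝ) + 1) * ((n-1-k:ℕ):ℝ) * Real.pi / ((n:ℝ)-1)) = _
    rw [hcast]
    have : ((m:ℝ)+1) = ((m+1 : ℕ):ℝ) := by push_cast; ring
    rw [this, harg (m+1), sin_nat_pi_sub']
  rw [hvm _ hA, hvm _ hB, hvm _ hC]
  have e1 : (-1:ℝ)^(2*j.val+1) = -1 := Odd.neg_one_pow ⟨j.val, by ring⟩
  have e2 : (-1:ℝ)^(2*j.val+1+1) = 1 := Even.neg_one_pow ⟨j.val+1, by ring⟩
  have e3 : (-1:ℝ)^(2*j.val+2+1) = -1 := Odd.neg_one_pow ⟨j.val+1, by ring⟩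
  rw [e1, e2, e3]
  have hvc : vcoarse n k j = Real.sin ((2*(j.val:ℝ)+2) * a) := by
    show Real.sin (2 * ((j.val:ℝ) + 1) * (k:ℝ) * Real.pi / ((n:ℝ)-1)) = _
    rw [hadef]; congr 1; field_simp
  have hth : theta n k = a / 2 := by
    show (k:ℝ) * Real.pi / (2 * ((n:ℝ)-1)) = a / 2
    rw [hadef]; field_simp
  rw [Pi.smul_apply, smul_eq_mul, hvc, hth]
  have r1 : (((2*j.val:ℕ):ℝ) + 1) * a = (2*(j.val:ℝ)+2)*a - a := by push_cast; ring
  have r2 : (((2*j.val+1:ℕ):ℝ) + 1) * a = (2*(j.val:ℝ)+2)*a := by push_cast; ring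
  have r3 : (((2*j.val+2:ℕ):ℝ) + 1) * a = (2*(j.val:ℝ)+2)*a + a := by push_cast; ring
  rw [r1, r2, r3]
  have hca : Real.cos a = 1 - 2 * Real.sin (a/2)^2 := by
    have h1 := Real.cos_two_mul (a/2)
    have h2 := Real.sin_sq_add_cos_sq (a/2)
    rw [show 2*(a/2) = a by ring] at h1
    linarith
  have key : 1/2 * Real.sin ((2*(j.val:ℝ)+2)*a - a) - Real.sin ((2*(j.val:ℝ)+2)*a)
      + 1/2 * Real.sin ((2*(j.val:ℝ)+2)*a + a)
      = -2 * Real.sin (a/2)^2 * Real.sin ((2*(j.val:ℝ)+2)*a) := by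
    rw [Real.sin_sub, Real.sin_add, hca]; ring
  linarith [key]
end

section
/- Let n be odd, n ≥ 5, A^h = (1/h²)tridiag(−1,2,−1) ∈ ℝ^{(n-2)×(n-2)} with h = 1/(n−1), and define the Galerkin coarse matrix A^{2h} = I_h^{2h} A^h I_{2h}^h. Then for 1 ≤ k ≤ (n−3)/2, A^{2h} v_k^{2h} = (2/h²) sin²(kπ h) v_k^{2h}, where v_k^{2h}(j) = sin(2jkπ/(n−1)). -/
open Real Matrix

lemma sum_if_val {M : ℕ} (t : ℕ) (f : Fin M → ℝ) :
    ∑ j : Fin M, (if j.val = t then f j else 0) =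
      if h : t < M then f ⟨t, h⟩ else 0 := by
  by_cases h : t < M
  · rw [dif_pos h, Finset.sum_eq_single ⟨t, h⟩]
    · simp
    · intro b _ hb
      exact if_neg (fun hc => hb (Fin.ext hc))
    · simp
  · rw [dif_neg h]
    apply Finset.sum_eq_zero
    intro j _
    rw [if_neg]
    intro hc
    exact h (hc ▸ j.isLt)

lemma trig1 (x a : ℝ) :
    Real.sin (x - a) + Real.sin (x + a) = 2 * Real.sin x * Real.cos a := by
  rw [Real.sin_sub, Real.sin_add]; ring

set_option maxHeartbeats 2000000 in
theorem coarseA_eigen (n : ℕ) (hodd : Odd n) (hn : 5 ≤ n)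
    (k : ℕ) (hk1 : 1 ≤ k) (hk2 : k ≤ (n-3)/2) :
    (coarseA n).mulVec (vcoarse n k) =
      (2 * ((n : ℝ) - 1)^2 * Real.sin (k * Real.pi / ((n : ℝ) - 1)) ^ 2) • vcoarse n k := by
  obtain ⟨s, hs⟩ := hodd
  set m := (n-3)/2 with hmdef
  have hm1 : 1 ≤ m := le_trans hk1 hk2
  have hn3 : n = 2*m+3 := by omega
  have hn2 : n - 2 = 2*m+1 := by omega
  set α := (k:ℝ) * Real.pi / ((n:ℝ) - 1) with hα
  have hden : ((n:ℝ) - 1) = 2*(m:ℝ) + 2 := by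
    rw [hn3]; push_cast; ring
  have hdenne : ((n:ℝ) - 1) ≠ 0 := by rw [hden]; positivity
  have htop : ∀ x : ℝ, x = 2*(m:ℝ)+2 → Real.sin (x * α) = 0 := by
    intro x hx
    have hxk : x * α = k * Real.pi := by
      rw [hx, hα, ← hden]; field_simp
    rw [hxk]
    exact Real.sin_nat_mul_pi k
  have hv : ∀ j : Fin ((n-3)/2), vcoarse n k j = Real.sin ((2*(j.val:ℝ)+2) * α) := by
    intro j
    show Real.sin _ = Real.sin _
    congr 1
    rw [hα]
    push_cast
    ring
  -- step A
  have hA : ∀ i : Fin (n-2), (interp n).mulVec (vcoarse n k) i =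
      (if Even i.val then Real.cos α else 1) * Real.sin (((i.val:ℝ)+1)*α) := by
    intro i
    have hilt : i.val < 2*m+1 := hn2 ▸ i.isLt
    show ∑ j, interp n i j * vcoarse n k j = _
    rcases Nat.even_or_odd i.val with he | ho
    · obtain ⟨t, ht⟩ := id he
      have hi2 : i.val = 2*t := by omega
      have htm : t ≤ m := by omega
      rw [if_pos he]
      rw [show ((i.val:ℝ)+1)*α = (2*(t:ℝ)+1)*α by rw [hi2]; push_cast; ring]
      have key := trig1 ((2*(t:ℝ)+1)*α) α
      have e2 : (2*(t:ℝ)+1)*α + α = (2*(t:ℝ)+2)*α := by ring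
      rw [e2] at key
      rcases Nat.eq_zero_or_pos t with ht0 | ht1
      · have step : ∀ j ∈ Finset.univ, interp n i j * vcoarse n k j =
            (if j.val = t then (1/2) * Real.sin ((2*(j.val:ℝ)+2)*α) else 0) := by
          intro j _
          rw [interp, Matrix.of_apply, hv j]
          split_ifs <;> first | ring1 | (exfalso; omega)
        rw [Finset.sum_congr rfl step, sum_if_val, dif_pos (show t < m by omega)]
        have hz : Real.sin ((2*(t:ℝ)+1)*α - α) = 0 := by
          rw [show (2*(t:ℝ)+1)*α - α = (2*(t:ℝ))*α by ring, ht0]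
          norm_num
        linarith [key, hz]
      · have step : ∀ j ∈ Finset.univ, interp n i j * vcoarse n k j =
            (if j.val = t then (1/2) * Real.sin ((2*(j.val:ℝ)+2)*α) else 0)
            + (if j.val = t-1 then (1/2) * Real.sin ((2*(j.val:ℝ)+2)*α) else 0) := by
          intro j _
          rw [interp, Matrix.of_apply, hv j]
          split_ifs <;> first | ring1 | (exfalso; omega)
        rw [Finset.sum_congr rfl step, Finset.sum_add_distrib, sum_if_val, sum_if_val,
            dif_pos (show t-1 < m by omega)]
        have e1 : Real.sin ((2*(((t-1:ℕ)):ℝ)+2)*α) = Real.sin ((2*(t:ℝ)+1)*α - α) := by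
          congr 1
          rw [Nat.cast_sub ht1]
          push_cast
          ring
        rw [e1]
        by_cases htm' : t < m
        · rw [dif_pos htm']
          linarith [key]
        · rw [dif_neg htm']
          have hz : Real.sin ((2*(t:ℝ)+2)*α) = 0 := by
            apply htop
            have : t = m := by omega
            rw [this]
          linarith [key, hz]
    · obtain ⟨t, ht⟩ := id ho
      have step : ∀ j ∈ Finset.univ, interp n i j * vcoarse n k j =
          (if j.val = t then Real.sin ((2*(j.val:ℝ)+2)*α) else 0) := by
        intro j _
        rw [interp, Matrix.of_apply, hv j]
        split_ifs <;> first | ring1 | (exfalso; omega)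
      rw [Finset.sum_congr rfl step, sum_if_val, dif_pos (show t < m by omega),
          if_neg (Nat.not_even_iff_odd.mpr ho)]
      rw [show ((i.val:ℝ)+1)*α = (2*(t:ℝ)+2)*α by rw [ht]; push_cast; ring]
      ring
  -- step B
  have hB : ∀ i : Fin (n-2), (lap n).mulVec ((interp n).mulVec (vcoarse n k)) i =
      if Even i.val then 0
      else 2*((n:ℝ)-1)^2 * Real.sin α^2 * Real.sin (((i.val:ℝ)+1)*α) := by
    intro i
    have hilt : i.val < 2*m+1 := hn2 ▸ i.isLt
    show ∑ j, lap n i j * (interp n).mulVec (vcoarse n k) j = _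
    rcases Nat.even_or_odd i.val with he | ho
    · rw [if_pos he]
      obtain ⟨t, ht⟩ := id he
      have hi2 : i.val = 2*t := by omega
      have htm : t ≤ m := by omega
      rcases Nat.eq_zero_or_pos t with ht0 | htpos
      · have step : ∀ j ∈ Finset.univ, lap n i j * (interp n).mulVec (vcoarse n k) j =
            (if j.val = 0 then ((n:ℝ)-1)^2 * (2 * (Real.cos α * Real.sin (((j.val:ℝ))*α + α))) else 0)
            + (if j.val = 1 then ((n:ℝ)-1)^2 * (-1 * Real.sin (((j.val:ℝ))*α + α)) else 0) := by
          intro j _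
          rw [hA j, lap, Matrix.of_apply]
          simp only [Fin.ext_iff, Nat.even_iff]
          split_ifs <;>
            first
              | (exfalso; omega)
              | (push_cast; ring_nf)
        rw [Finset.sum_congr rfl step, Finset.sum_add_distrib, sum_if_val, sum_if_val,
            dif_pos (show 0 < n-2 by omega), dif_pos (show 1 < n-2 by omega)]
        try simp only [Fin.val_mk]
        push_cast
        linear_combination (norm := ring_nf) (-(((n:ℝ)-1)^2)) * Real.sin_two_mul α
      · obtain ⟨t', rfl⟩ : ∃ t', t = t'+1 := ⟨t-1, by omega⟩
        have step : ∀ j ∈ Finset.univ, lap n i j * (interp n).mulVec (vcoarse n k) j =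
            (if j.val = 2*t'+2 then ((n:ℝ)-1)^2 * (2 * (Real.cos α * Real.sin (((j.val:ℝ))*α + α))) else 0)
            + (if j.val = 2*t'+3 then ((n:ℝ)-1)^2 * (-1 * Real.sin (((j.val:ℝ))*α + α)) else 0)
            + (if j.val = 2*t'+1 then ((n:ℝ)-1)^2 * (-1 * Real.sin (((j.val:ℝ))*α + α)) else 0) := by
          intro j _
          rw [hA j, lap, Matrix.of_apply]
          simp only [Fin.ext_iff, Nat.even_iff]
          split_ifs <;>
            first
              | (exfalso; omega)
              | (push_cast; ring_nf)
        rw [Finset.sum_congr rfl step, Finset.sum_add_distrib, Finset.sum_add_distrib,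
            sum_if_val, sum_if_val, sum_if_val,
            dif_pos (show 2*t'+2 < n-2 by omega), dif_pos (show 2*t'+1 < n-2 by omega)]
        try simp only [Fin.val_mk]
        have key := trig1 ((2*(t':ℝ)+3)*α) α
        by_cases hb : 2*t'+3 < n-2
        · rw [dif_pos hb]
          try simp only [Fin.val_mk] <;> skip
          push_cast
          linear_combination (norm := ring_nf) (-(((n:ℝ)-1)^2)) * key
        · have ht'm : t' + 1 = m := by omega
          have hz : Real.sin ((2*(t':ℝ)+3)*α + α) = 0 := by
            rw [show (2*(t':ℝ)+3)*α + α = (2*(t':ℝ)+4)*α by ring]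
            apply htop
            have := congrArg (fun x : ℕ => (x:ℝ)) ht'm
            push_cast at this
            linarith
          rw [dif_neg hb]
          push_cast
          linear_combination (norm := ring_nf) (-(((n:ℝ)-1)^2)) * key + (((n:ℝ)-1)^2) * hz
    · rw [if_neg (Nat.not_even_iff_odd.mpr ho)]
      obtain ⟨t, ht⟩ := id ho
      have htm : t < m := by omega
      have step : ∀ j ∈ Finset.univ, lap n i j * (interp n).mulVec (vcoarse n k) j =
          (if j.val = 2*t+1 then ((n:ℝ)-1)^2 * (2 * Real.sin (((j.val:ℝ))*α + α)) else 0)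
          + (if j.val = 2*t+2 then ((n:ℝ)-1)^2 * (-1 * (Real.cos α * Real.sin (((j.val:ℝ))*α + α))) else 0)
          + (if j.val = 2*t then ((n:ℝ)-1)^2 * (-1 * (Real.cos α * Real.sin (((j.val:ℝ))*α + α))) else 0) := by
        intro j _
        rw [hA j, lap, Matrix.of_apply]
        simp only [Fin.ext_iff, Nat.even_iff]
        split_ifs <;>
          first
            | (exfalso; omega)
            | (push_cast; ring_nf)
      rw [Finset.sum_congr rfl step, Finset.sum_add_distrib, Finset.sum_add_distrib,
          sum_if_val, sum_if_val, sum_if_val,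
          dif_pos (show 2*t+1 < n-2 by omega), dif_pos (show 2*t+2 < n-2 by omega),
          dif_pos (show 2*t < n-2 by omega)]
      try simp only [Fin.val_mk]
      rw [show ((i.val:ℝ)+1)*α = (2*(t:ℝ)+2)*α by rw [ht]; push_cast; ring]
      have key := trig1 ((2*(t:ℝ)+2)*α) α
      have h2 := Real.sin_sq_add_cos_sq α
      push_cast
      linear_combination (norm := ring_nf) (-(((n:ℝ)-1)^2) * Real.cos α) * key
        - (2*((n:ℝ)-1)^2 * Real.sin ((2*(t:ℝ)+2)*α)) * h2
  -- step C
  have hC : ∀ j : Fin ((n-3)/2),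
      (interp n)ᵀ.mulVec ((lap n).mulVec ((interp n).mulVec (vcoarse n k))) j =
      (2 * ((n:ℝ)-1)^2 * Real.sin α ^ 2) * vcoarse n k j := by
    intro j
    show ∑ i, (interp n)ᵀ j i * (lap n).mulVec ((interp n).mulVec (vcoarse n k)) i = _
    have step : ∀ i ∈ Finset.univ,
        (interp n)ᵀ j i * (lap n).mulVec ((interp n).mulVec (vcoarse n k)) i =
        (if i.val = 2*j.val+1 then
          2*((n:ℝ)-1)^2 * Real.sin α^2 * Real.sin (((i.val:ℝ)+1)*α) else 0) := by
      intro i _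
      rw [Matrix.transpose_apply, hB i, interp, Matrix.of_apply]
      simp only [Nat.even_iff]
      split_ifs <;> first | ring1 | (exfalso; omega)
    rw [Finset.sum_congr rfl step, sum_if_val, dif_pos (show 2*j.val+1 < n-2 by omega), hv j]
    try simp only [Fin.val_mk]
    push_cast
    linear_combination (norm := ring_nf)
  funext j
  have : (coarseA n).mulVec (vcoarse n k) =
      (interp n)ᵀ.mulVec ((lap n).mulVec ((interp n).mulVec (vcoarse n k))) := by
    rw [Matrix.mulVec_mulVec, Matrix.mulVec_mulVec, coarseA, Matrix.mul_assoc]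
  rw [this]
  rw [hC j]
  simp [hα]
end

section
/- Let n be odd. With λ_k(S_J^m) denoting the eigenvalue of the composed weighted-Jacobi smoother on mode v_k, the two-grid iteration matrix R^{TG} = (I − I_{2h}^h (A^{2h})^{-1} I_h^{2h} A^h) S_J^m satisfies R^{TG}(v_k + v_{n−1−k}) = μ_k (v_k + v_{n−1−k}) for 1 ≤ k ≤ (n−1)/2, where μ_k = λ_k(S_J^m) sin²(kπh/2) + λ_{n−1−k}(S_J^m) cos²(kπh/2) and h = 1/(n−1). -/
open Real Matrix

-- ### auxiliary lemmas

lemma fin_sum_pick (M t : ℕ) (f : Fin M → ℝ) (y : ℝ) (ht : t < M)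
    (hy : ∀ j : Fin M, j.1 = t → f j = y)
    (h : ∀ j : Fin M, j.1 ≠ t → f j = 0) : ∑ j, f j = y := by
  have : ∑ j, f j = f ⟨t, ht⟩ := by
    apply Finset.sum_eq_single
    · intro j _ hj
      exact h j (by simpa [Fin.ext_iff] using hj)
    · intro hb; exact absurd (Finset.mem_univ _) hb
  rw [this]; exact hy _ rfl

lemma fin_sum_zero (M : ℕ) (f : Fin M → ℝ) (h : ∀ j, f j = 0) : ∑ j, f j = 0 :=
  Finset.sum_eq_zero (fun j _ => h j)

lemma hne_aux (n : ℕ) (hn : 3 ≤ n) : ((n:ℝ) - 1) ≠ 0 := by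
  have : (3:ℝ) ≤ n := by exact_mod_cast hn
  linarith

lemma lamk_theta (n k : ℕ) : lamk n k = 4 * ((n:ℝ)-1)^2 * Real.sin (theta n k)^2 := rfl

lemma lap_mulVec (n k : ℕ) (hn : 3 ≤ n) :
    (lap n).mulVec (vmode n k) = lamk n k • vmode n k := by
  have hne : ((n:ℝ)-1) ≠ 0 := hne_aux n hn
  set E : ℝ := ((n:ℝ)-1)^2 with hE
  set β : ℝ := (k:ℝ) * π / ((n:ℝ)-1) with hβ
  have hvm : ∀ j : Fin (n-2), vmode n k j = Real.sin (((j.1:ℝ)+1) * β) := by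
    intro j
    unfold vmode
    congr 1
    rw [hβ]; ring
  have hβπ : ((n:ℝ)-1) * β = (k:ℝ) * π := by rw [hβ]; field_simp
  funext i
  show ∑ j, lap n i j * vmode n k j = (lamk n k • vmode n k) i
  have hdec : ∀ j : Fin (n-2), lap n i j * vmode n k j =
      (if j.1 = i.1 then E * 2 * Real.sin (((j.1:ℝ)+1) * β) else 0)
    + (if j.1 = i.1 + 1 then -E * Real.sin (((j.1:ℝ)+1) * β) else 0)
    + (if j.1 + 1 = i.1 then -E * Real.sin (((j.1:ℝ)+1) * β) else 0) := by
    intro j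
    rw [hvm j]
    show E * (if i = j then 2 else if i.1 + 1 = j.1 ∨ j.1 + 1 = i.1 then -1 else 0)
        * Real.sin (((j.1:ℝ)+1) * β) = _
    simp only [Fin.ext_iff]
    split_ifs <;> first | ring1 | (exfalso; omega)
  rw [Finset.sum_congr rfl (fun j _ => hdec j), Finset.sum_add_distrib,
    Finset.sum_add_distrib]
  have hS1 : (∑ j : Fin (n-2), if j.1 = i.1 then E * 2 * Real.sin (((j.1:ℝ)+1) * β) else 0)
      = E * 2 * Real.sin (((i.1:ℝ)+1) * β) := by
    apply fin_sum_pick (n-2) i.1 _ _ i.isLt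
    · intro j hj
      rw [if_pos hj, hj]
    · intro j hj; rw [if_neg hj]
  have hS2 : (∑ j : Fin (n-2), if j.1 = i.1 + 1 then -E * Real.sin (((j.1:ℝ)+1) * β) else 0)
      = -E * Real.sin (((i.1:ℝ)+2) * β) := by
    by_cases hlt : i.1 + 1 < n - 2
    · apply fin_sum_pick (n-2) (i.1+1) _ _ hlt
      · intro j hj
        rw [if_pos hj]
        have : (j.1:ℝ) + 1 = (i.1:ℝ) + 2 := by exact_mod_cast congrArg (fun t : ℕ => (t:ℝ) + 1) hj
        rw [this]
      · intro j hj; rw [if_neg hj]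
    · have hi : i.1 = n - 3 := by have := i.isLt; omega
      rw [fin_sum_zero]
      · have hcast : (i.1:ℝ) = (n:ℝ) - 3 := by
          rw [hi, Nat.cast_sub (by omega)]; norm_num
        have : ((i.1:ℝ)+2) * β = (k:ℝ) * π := by
          rw [hcast, ← hβπ]; ring
        rw [this, Real.sin_nat_mul_pi]; ring
      · intro j; rw [if_neg]; have := j.isLt; omega
  have hS3 : (∑ j : Fin (n-2), if j.1 + 1 = i.1 then -E * Real.sin (((j.1:ℝ)+1) * β) else 0)
      = -E * Real.sin ((i.1:ℝ) * β) := by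
    by_cases hpos : 1 ≤ i.1
    · apply fin_sum_pick (n-2) (i.1-1) _ _ (by have := i.isLt; omega)
      · intro j hj
        rw [if_pos (by omega)]
        have : (j.1:ℝ) + 1 = (i.1:ℝ) := by
          have h2 : j.1 + 1 = i.1 := by omega
          exact_mod_cast congrArg (fun t : ℕ => (t:ℝ)) h2
        rw [this]
      · intro j hj; rw [if_neg]; omega
    · rw [fin_sum_zero]
      · have hi : i.1 = 0 := by omega
        rw [hi]; simp
      · intro j; rw [if_neg]; omega
  rw [hS1, hS2, hS3]
  have hcosβ : Real.cos β = 1 - 2 * Real.sin (β/2)^2 := by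
    have h1 : β = 2 * (β/2) := by ring
    rw [h1, Real.cos_two_mul', Real.cos_sq']; ring
  have hθ : theta n k = β / 2 := by
    unfold theta; rw [hβ]; rw [div_div]; ring_nf
  have hR : (lamk n k • vmode n k) i = (4 * E * Real.sin (β/2)^2) * Real.sin (((i.1:ℝ)+1) * β) := by
    show lamk n k * vmode n k i = _
    rw [hvm i, lamk_theta, hθ]
  rw [hR]
  have e1 : ((i.1:ℝ)+2) * β = ((i.1:ℝ)+1) * β + β := by ring
  have e2 : ((i.1:ℝ)) * β = ((i.1:ℝ)+1) * β - β := by ring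
  rw [e1, e2, Real.sin_add, Real.sin_sub, hcosβ]
  ring
lemma cos_npi (m : ℕ) : Real.cos ((m:ℝ) * π) = (-1)^m := by
  simpa using Real.cos_nat_mul_pi_sub 0 m

lemma vmode_flip (n k : ℕ) (hn : 3 ≤ n) (hk : k ≤ n-1) (i : Fin (n-2)) :
    vmode n (n-1-k) i = (-1)^(i.1) * vmode n k i := by
  have hne : ((n:ℝ)-1) ≠ 0 := hne_aux n hn
  unfold vmode
  have hc : ((n-1-k : ℕ):ℝ) = ((n:ℝ)-1) - k := by
    rw [Nat.cast_sub hk, Nat.cast_sub (by omega : 1 ≤ n)]; norm_num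
  rw [hc]
  have harg : ((i.1:ℝ)+1) * (((n:ℝ)-1) - k) * π / ((n:ℝ)-1)
      = ((i.1 + 1 : ℕ):ℝ) * π - ((i.1:ℝ)+1) * k * π / ((n:ℝ)-1) := by
    push_cast
    field_simp
  rw [harg, Real.sin_nat_mul_pi_sub, pow_succ]
  ring

lemma vcoarse_flip (n k : ℕ) (hn : 3 ≤ n) (hk : k ≤ n-1) :
    vcoarse n (n-1-k) = -vcoarse n k := by
  have hne : ((n:ℝ)-1) ≠ 0 := hne_aux n hn
  funext j
  show vcoarse n (n-1-k) j = -vcoarse n k j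
  unfold vcoarse
  have hc : ((n-1-k : ℕ):ℝ) = ((n:ℝ)-1) - k := by
    rw [Nat.cast_sub hk, Nat.cast_sub (by omega : 1 ≤ n)]; norm_num
  rw [hc]
  have harg : 2 * ((j.1:ℝ)+1) * (((n:ℝ)-1) - k) * π / ((n:ℝ)-1)
      = ((2 * (j.1 + 1) : ℕ):ℝ) * π - 2 * ((j.1:ℝ)+1) * k * π / ((n:ℝ)-1) := by
    push_cast
    field_simp
  rw [harg, Real.sin_nat_mul_pi_sub, Even.neg_one_pow ⟨j.1+1, by ring⟩]
  ring

lemma theta_flip (n k : ℕ) (hn : 3 ≤ n) (hk : k ≤ n-1) :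
    theta n (n-1-k) = π/2 - theta n k := by
  have hne : ((n:ℝ)-1) ≠ 0 := hne_aux n hn
  unfold theta
  have hc : ((n-1-k : ℕ):ℝ) = ((n:ℝ)-1) - k := by
    rw [Nat.cast_sub hk, Nat.cast_sub (by omega : 1 ≤ n)]; norm_num
  rw [hc]
  field_simp

lemma lamk_flip (n k : ℕ) (hn : 3 ≤ n) (hk : k ≤ n-1) :
    lamk n (n-1-k) = 4 * ((n:ℝ)-1)^2 * Real.cos (theta n k)^2 := by
  rw [lamk_theta, theta_flip n k hn hk, Real.sin_pi_div_two_sub]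

lemma restrict_vmode (n k : ℕ) (hodd : Odd n) (hn : 3 ≤ n) :
    (interp n)ᵀ.mulVec (vmode n k) = (2 * Real.cos (theta n k)^2) • vcoarse n k := by
  obtain ⟨m, hm⟩ := hodd
  have hne : ((n:ℝ)-1) ≠ 0 := hne_aux n hn
  set β : ℝ := (k:ℝ) * π / ((n:ℝ)-1) with hβ
  have hvm : ∀ i : Fin (n-2), vmode n k i = Real.sin (((i.1:ℝ)+1) * β) := by
    intro i; unfold vmode; congr 1; rw [hβ]; ring
  funext j
  show ∑ i, (interp n)ᵀ j i * vmode n k i = _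
  have hdec : ∀ i : Fin (n-2), (interp n)ᵀ j i * vmode n k i =
      (if i.1 = 2*j.1 then (1/2) * Real.sin (((i.1:ℝ)+1) * β) else 0)
    + (if i.1 = 2*j.1 + 1 then Real.sin (((i.1:ℝ)+1) * β) else 0)
    + (if i.1 = 2*j.1 + 2 then (1/2) * Real.sin (((i.1:ℝ)+1) * β) else 0) := by
    intro i
    rw [hvm i]
    show (if i.1 + 1 = 2*j.1 + 1 then (1/2:ℝ)
      else if i.1 + 1 = 2*j.1 + 2 then 1
      else if i.1 + 1 = 2*j.1 + 3 then 1/2 else 0) * Real.sin (((i.1:ℝ)+1) * β) = _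
    split_ifs <;> first | ring1 | (exfalso; omega)
  rw [Finset.sum_congr rfl (fun i _ => hdec i), Finset.sum_add_distrib,
    Finset.sum_add_distrib]
  have hrange : 2*j.1 + 2 < n - 2 := by have := j.isLt; omega
  have hT1 : (∑ i : Fin (n-2), if i.1 = 2*j.1 then (1/2) * Real.sin (((i.1:ℝ)+1) * β) else 0)
      = (1/2) * Real.sin ((2*(j.1:ℝ)+1) * β) := by
    apply fin_sum_pick (n-2) (2*j.1) _ _ (by omega)
    · intro i hi
      rw [if_pos hi]
      have : (i.1:ℝ) + 1 = 2*(j.1:ℝ)+1 := by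
        have : (i.1:ℝ) = 2*(j.1:ℝ) := by exact_mod_cast congrArg (Nat.cast : ℕ → ℝ) hi
        linarith
      rw [this]
    · intro i hi; rw [if_neg hi]
  have hT2 : (∑ i : Fin (n-2), if i.1 = 2*j.1+1 then Real.sin (((i.1:ℝ)+1) * β) else 0)
      = Real.sin ((2*(j.1:ℝ)+2) * β) := by
    apply fin_sum_pick (n-2) (2*j.1+1) _ _ (by omega)
    · intro i hi
      rw [if_pos hi]
      have : (i.1:ℝ) + 1 = 2*(j.1:ℝ)+2 := by
        have : (i.1:ℝ) = 2*(j.1:ℝ)+1 := by exact_mod_cast congrArg (Nat.cast : ℕ → ℝ) hi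
        linarith
      rw [this]
    · intro i hi; rw [if_neg hi]
  have hT3 : (∑ i : Fin (n-2), if i.1 = 2*j.1+2 then (1/2) * Real.sin (((i.1:ℝ)+1) * β) else 0)
      = (1/2) * Real.sin ((2*(j.1:ℝ)+3) * β) := by
    apply fin_sum_pick (n-2) (2*j.1+2) _ _ (by omega)
    · intro i hi
      rw [if_pos hi]
      have : (i.1:ℝ) + 1 = 2*(j.1:ℝ)+3 := by
        have : (i.1:ℝ) = 2*(j.1:ℝ)+2 := by exact_mod_cast congrArg (Nat.cast : ℕ → ℝ) hi
        linarith
      rw [this]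
    · intro i hi; rw [if_neg hi]
  rw [hT1, hT2, hT3]
  have hw : (((2:ℝ) * Real.cos (theta n k)^2) • vcoarse n k) j
      = 2 * Real.cos (theta n k)^2 * Real.sin ((2*(j.1:ℝ)+2) * β) := by
    show 2 * Real.cos (theta n k)^2 * vcoarse n k j = _
    unfold vcoarse
    congr 2
    rw [hβ]; ring
  rw [hw]
  have hθ : theta n k = β / 2 := by
    unfold theta; rw [hβ, div_div]; ring_nf
  have hcosβ : Real.cos β = 2 * Real.cos (β/2)^2 - 1 := by
    have h1 := Real.cos_two_mul (β/2)
    have h2 : 2*(β/2) = β := by ring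
    rw [h2] at h1
    exact h1
  have e1 : (2*(j.1:ℝ)+1) * β = (2*(j.1:ℝ)+2) * β - β := by ring
  have e3 : (2*(j.1:ℝ)+3) * β = (2*(j.1:ℝ)+2) * β + β := by ring
  rw [e1, e3, Real.sin_add, Real.sin_sub, hθ, hcosβ]
  ring
lemma interp_vcoarse (n k : ℕ) (hodd : Odd n) (hn : 3 ≤ n) (hk : k ≤ n-1) :
    (interp n).mulVec (vcoarse n k) =
      Real.cos (theta n k)^2 • vmode n k - Real.sin (theta n k)^2 • vmode n (n-1-k) := by
  obtain ⟨m, hm⟩ := hodd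
  have hne : ((n:ℝ)-1) ≠ 0 := hne_aux n hn
  set β : ℝ := (k:ℝ) * π / ((n:ℝ)-1) with hβ
  have hβπ : ((n:ℝ)-1) * β = (k:ℝ) * π := by rw [hβ]; field_simp
  have hvm : ∀ i : Fin (n-2), vmode n k i = Real.sin (((i.1:ℝ)+1) * β) := by
    intro i; unfold vmode; congr 1; rw [hβ]; ring
  have hvc : ∀ j : Fin ((n-3)/2), vcoarse n k j = Real.sin ((2*(j.1:ℝ)+2) * β) := by
    intro j; unfold vcoarse; congr 1; rw [hβ]; ring
  have h2θ : 2 * theta n k = β := by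
    unfold theta; rw [hβ]; field_simp
  funext i
  show ∑ j, interp n i j * vcoarse n k j = _
  have hRHS : (Real.cos (theta n k)^2 • vmode n k - Real.sin (theta n k)^2 • vmode n (n-1-k)) i
      = Real.cos (theta n k)^2 * Real.sin (((i.1:ℝ)+1) * β)
        - Real.sin (theta n k)^2 * ((-1)^(i.1) * Real.sin (((i.1:ℝ)+1) * β)) := by
    show Real.cos (theta n k)^2 * vmode n k i - Real.sin (theta n k)^2 * vmode n (n-1-k) i = _
    rw [vmode_flip n k hn hk i, hvm i]
  rw [hRHS]
  rcases Nat.even_or_odd i.1 with ⟨t, ht⟩ | ⟨t, ht⟩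
  · -- even case : i.1 = t + t
    have hdec : ∀ j : Fin ((n-3)/2), interp n i j * vcoarse n k j =
        (if j.1 = t then (1/2) * Real.sin ((2*(j.1:ℝ)+2) * β) else 0)
      + (if j.1 + 1 = t then (1/2) * Real.sin ((2*(j.1:ℝ)+2) * β) else 0) := by
      intro j
      rw [hvc j]
      show (if i.1 + 1 = 2*j.1 + 1 then (1/2:ℝ)
        else if i.1 + 1 = 2*j.1 + 2 then 1
        else if i.1 + 1 = 2*j.1 + 3 then 1/2 else 0) * Real.sin ((2*(j.1:ℝ)+2) * β) = _
      split_ifs <;> first | ring1 | (exfalso; omega)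
    rw [Finset.sum_congr rfl (fun j _ => hdec j), Finset.sum_add_distrib]
    have hU1 : (∑ j : Fin ((n-3)/2), if j.1 = t then (1/2) * Real.sin ((2*(j.1:ℝ)+2) * β) else 0)
        = (1/2) * Real.sin (((i.1:ℝ)+2) * β) := by
      by_cases hlt : t < (n-3)/2
      · apply fin_sum_pick _ t _ _ hlt
        · intro j hj
          rw [if_pos hj]
          have h2 : 2*(j.1:ℝ)+2 = (i.1:ℝ)+2 := by
            have : 2*j.1+2 = i.1+2 := by omega
            exact_mod_cast congrArg (Nat.cast : ℕ → ℝ) this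
          rw [h2]
        · intro j hj; rw [if_neg hj]
      · rw [fin_sum_zero]
        · have hi : i.1 = n - 3 := by have := i.isLt; omega
          have hcast : (i.1:ℝ) = (n:ℝ) - 3 := by
            rw [hi, Nat.cast_sub (by omega)]; norm_num
          have : ((i.1:ℝ)+2) * β = (k:ℝ) * π := by rw [hcast, ← hβπ]; ring
          rw [this, Real.sin_nat_mul_pi]; ring
        · intro j; rw [if_neg]; have := j.isLt; omega
    have hU2 : (∑ j : Fin ((n-3)/2), if j.1 + 1 = t then (1/2) * Real.sin ((2*(j.1:ℝ)+2) * β) else 0)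
        = (1/2) * Real.sin ((i.1:ℝ) * β) := by
      by_cases hpos : 1 ≤ t
      · apply fin_sum_pick _ (t-1) _ _ (by have := i.isLt; omega)
        · intro j hj
          rw [if_pos (by omega)]
          have h2 : 2*(j.1:ℝ)+2 = (i.1:ℝ) := by
            have : 2*j.1+2 = i.1 := by omega
            exact_mod_cast congrArg (Nat.cast : ℕ → ℝ) this
          rw [h2]
        · intro j hj; rw [if_neg]; omega
      · rw [fin_sum_zero]
        · have hi : i.1 = 0 := by omega
          rw [hi]; simp
        · intro j; rw [if_neg]; omega
    rw [hU1, hU2]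
    have hpow : ((-1:ℝ))^(i.1) = 1 := Even.neg_one_pow ⟨t, ht⟩
    rw [hpow]
    have hcos : Real.cos β = Real.cos (theta n k)^2 - Real.sin (theta n k)^2 := by
      rw [← h2θ, Real.cos_two_mul']
    have e1 : ((i.1:ℝ)+2) * β = ((i.1:ℝ)+1) * β + β := by ring
    have e2 : ((i.1:ℝ)) * β = ((i.1:ℝ)+1) * β - β := by ring
    rw [e1, e2, Real.sin_add, Real.sin_sub, hcos]
    ring
  · -- odd case : i.1 = 2*t + 1
    have hdec : ∀ j : Fin ((n-3)/2), interp n i j * vcoarse n k j =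
        (if j.1 = t then Real.sin ((2*(j.1:ℝ)+2) * β) else 0) := by
      intro j
      rw [hvc j]
      show (if i.1 + 1 = 2*j.1 + 1 then (1/2:ℝ)
        else if i.1 + 1 = 2*j.1 + 2 then 1
        else if i.1 + 1 = 2*j.1 + 3 then 1/2 else 0) * Real.sin ((2*(j.1:ℝ)+2) * β) = _
      split_ifs <;> first | ring1 | (exfalso; omega)
    rw [Finset.sum_congr rfl (fun j _ => hdec j)]
    have hU : (∑ j : Fin ((n-3)/2), if j.1 = t then Real.sin ((2*(j.1:ℝ)+2) * β) else 0)
        = Real.sin (((i.1:ℝ)+1) * β) := by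
      apply fin_sum_pick _ t _ _ (by have := i.isLt; omega)
      · intro j hj
        rw [if_pos hj]
        have h2 : 2*(j.1:ℝ)+2 = (i.1:ℝ)+1 := by
          have : 2*j.1+2 = i.1+1 := by omega
          exact_mod_cast congrArg (Nat.cast : ℕ → ℝ) this
        rw [h2]
      · intro j hj; rw [if_neg hj]
    rw [hU]
    have hpow : ((-1:ℝ))^(i.1) = -1 := Odd.neg_one_pow ⟨t, ht⟩
    rw [hpow]
    linear_combination (-(Real.sin (((i.1:ℝ)+1) * β))) * (Real.sin_sq_add_cos_sq (theta n k))
lemma coarse_eigen (n k : ℕ) (hodd : Odd n) (hn : 3 ≤ n) (hk : k ≤ n-1) :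
    (coarseA n).mulVec (vcoarse n k) =
      (8 * ((n:ℝ)-1)^2 * Real.sin (theta n k)^2 * Real.cos (theta n k)^2) • vcoarse n k := by
  have hs := Real.sin_sq_add_cos_sq (theta n k)
  unfold coarseA
  rw [← Matrix.mulVec_mulVec, ← Matrix.mulVec_mulVec, interp_vcoarse n k hodd hn hk,
    Matrix.mulVec_sub, Matrix.mulVec_smul, Matrix.mulVec_smul,
    lap_mulVec n k hn, lap_mulVec n (n-1-k) hn,
    Matrix.mulVec_sub, Matrix.mulVec_smul, Matrix.mulVec_smul,
    Matrix.mulVec_smul, Matrix.mulVec_smul,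
    restrict_vmode n k hodd hn, restrict_vmode n (n-1-k) hodd hn,
    vcoarse_flip n k hn hk, theta_flip n k hn hk,
    lamk_theta, lamk_flip n k hn hk, Real.cos_pi_div_two_sub]
  funext j
  simp only [Pi.sub_apply, Pi.smul_apply, Pi.neg_apply, smul_eq_mul]
  linear_combination (8 * ((n:ℝ)-1)^2 * Real.sin (theta n k)^2 * Real.cos (theta n k)^2
    * vcoarse n k j) * hs

lemma coarse_inv_eigen (n k : ℕ) (hodd : Odd n) (hn : 3 ≤ n)
    (hA2 : IsUnit (coarseA n).det) (hk1 : 1 ≤ k) (hk2 : k ≤ (n-1)/2) :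
    (coarseA n)⁻¹.mulVec (vcoarse n k) =
      (8 * ((n:ℝ)-1)^2 * Real.sin (theta n k)^2 * Real.cos (theta n k)^2)⁻¹ • vcoarse n k := by
  obtain ⟨m, hm⟩ := hodd
  have hk : k ≤ n - 1 := by omega
  have hn3 : (3:ℝ) ≤ n := by exact_mod_cast hn
  have hθpos : 0 < theta n k := by
    unfold theta
    apply div_pos
    · have : (0:ℝ) < k := by exact_mod_cast hk1
      positivity
    · linarith
  have hθlt : theta n k < π/2 := by
    unfold theta
    rw [div_lt_iff₀ (by linarith)]
    have hkr : (k:ℝ) ≤ ((n:ℝ)-1)/2 := by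
      have h1 : 2*k ≤ n - 1 := by omega
      have h2 : (2:ℝ)*k ≤ ((n-1:ℕ):ℝ) := by exact_mod_cast h1
      rw [Nat.cast_sub (by omega)] at h2
      push_cast at h2
      linarith
    have hπ := Real.pi_pos
    nlinarith
  have hsin : 0 < Real.sin (theta n k) :=
    Real.sin_pos_of_pos_of_lt_pi hθpos (by linarith [Real.pi_pos])
  have hcos : 0 < Real.cos (theta n k) :=
    Real.cos_pos_of_mem_Ioo ⟨by linarith [Real.pi_pos], hθlt⟩
  have hΛpos : 0 < 8 * ((n:ℝ)-1)^2 * Real.sin (theta n k)^2 * Real.cos (theta n k)^2 := by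
    have h1 : (0:ℝ) < ((n:ℝ)-1)^2 := by nlinarith
    exact mul_pos (mul_pos (mul_pos (by norm_num) h1) (pow_pos hsin 2)) (pow_pos hcos 2)
  set Λ : ℝ := 8 * ((n:ℝ)-1)^2 * Real.sin (theta n k)^2 * Real.cos (theta n k)^2 with hΛ
  have hΛne : Λ ≠ 0 := ne_of_gt hΛpos
  have heq : (coarseA n)⁻¹.mulVec ((coarseA n).mulVec (vcoarse n k)) = vcoarse n k := by
    rw [Matrix.mulVec_mulVec, Matrix.nonsing_inv_mul _ hA2, Matrix.one_mulVec]
  rw [coarse_eigen n k ⟨m, hm⟩ hn hk, Matrix.mulVec_smul] at heq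
  calc (coarseA n)⁻¹.mulVec (vcoarse n k)
      = Λ⁻¹ • (Λ • (coarseA n)⁻¹.mulVec (vcoarse n k)) := by
        rw [smul_smul, inv_mul_cancel₀ hΛne, one_smul]
    _ = Λ⁻¹ • vcoarse n k := by rw [heq]


theorem twogrid_eigen_low_modes (n : ℕ) (hodd : Odd n) (hn : 3 ≤ n)
    (S : Matrix (Fin (n-2)) (Fin (n-2)) ℝ) (μ : ℕ → ℝ)
    (hS : ∀ k, 1 ≤ k → k ≤ n - 2 → S.mulVec (vmode n k) = μ k • vmode n k)
    (hA2 : IsUnit (coarseA n).det)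
    (k : ℕ) (hk1 : 1 ≤ k) (hk2 : k ≤ (n-1)/2) :
    (twogrid n S).mulVec (vmode n k + vmode n (n-1-k)) =
      (μ k * Real.sin (theta n k) ^ 2 + μ (n-1-k) * Real.cos (theta n k) ^ 2) •
        (vmode n k + vmode n (n-1-k)) := by
  obtain ⟨m, hm⟩ := hodd
  have hk : k ≤ n - 1 := by omega
  set s := Real.sin (theta n k) with hsdef
  set c := Real.cos (theta n k) with hcdef
  have hpyth : s^2 + c^2 = 1 := Real.sin_sq_add_cos_sq (theta n k)
  set k' := n - 1 - k with hk'
  -- smoother action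
  have hSv : S.mulVec (vmode n k + vmode n k') = μ k • vmode n k + μ k' • vmode n k' := by
    rw [Matrix.mulVec_add, hS k hk1 (by omega), hS k' (by omega) (by omega)]
  -- Laplacian action
  have hAv : (lap n).mulVec (μ k • vmode n k + μ k' • vmode n k')
      = (μ k * lamk n k) • vmode n k + (μ k' * lamk n k') • vmode n k' := by
    rw [Matrix.mulVec_add, Matrix.mulVec_smul, Matrix.mulVec_smul,
      lap_mulVec n k hn, lap_mulVec n k' hn, smul_smul, smul_smul]
  -- restriction action
  have hPtv : (interp n)ᵀ.mulVec ((μ k * lamk n k) • vmode n k + (μ k' * lamk n k') • vmode n k')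
      = ((μ k * lamk n k) * (2*c^2) - (μ k' * lamk n k') * (2*s^2)) • vcoarse n k := by
    rw [Matrix.mulVec_add, Matrix.mulVec_smul, Matrix.mulVec_smul,
      restrict_vmode n k ⟨m, hm⟩ hn, restrict_vmode n k' ⟨m, hm⟩ hn,
      hk', theta_flip n k hn hk, Real.cos_pi_div_two_sub,
      vcoarse_flip n k hn hk]
    funext j
    simp only [Pi.add_apply, Pi.smul_apply, Pi.neg_apply, smul_eq_mul]
    ring
  set Λ : ℝ := 8 * ((n:ℝ)-1)^2 * s^2 * c^2 with hΛ
  set D : ℝ := (μ k * lamk n k) * (2*c^2) - (μ k' * lamk n k') * (2*s^2) with hD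
  have hCinv : (coarseA n)⁻¹.mulVec (D • vcoarse n k) = (D * Λ⁻¹) • vcoarse n k := by
    rw [Matrix.mulVec_smul, coarse_inv_eigen n k ⟨m, hm⟩ hn hA2 hk1 hk2, smul_smul]
  have hPv : (interp n).mulVec ((D * Λ⁻¹) • vcoarse n k)
      = (D * Λ⁻¹) • (c^2 • vmode n k - s^2 • vmode n k') := by
    rw [Matrix.mulVec_smul, interp_vcoarse n k ⟨m, hm⟩ hn hk, hk']
  -- assemble
  unfold twogrid
  rw [← Matrix.mulVec_mulVec, hSv, Matrix.sub_mulVec, Matrix.one_mulVec,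
    ← Matrix.mulVec_mulVec, ← Matrix.mulVec_mulVec, ← Matrix.mulVec_mulVec,
    hAv, hPtv, hCinv, hPv]
  -- now a pointwise real computation
  -- first compute D * Λ⁻¹
  have hlamk1 : lamk n k = 4 * ((n:ℝ)-1)^2 * s^2 := lamk_theta n k
  have hlamk2 : lamk n k' = 4 * ((n:ℝ)-1)^2 * c^2 := by
    rw [hk']; exact lamk_flip n k hn hk
  have hn3 : (3:ℝ) ≤ n := by exact_mod_cast hn
  have hθpos : 0 < theta n k := by
    unfold theta
    apply div_pos
    · have : (0:ℝ) < k := by exact_mod_cast hk1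
      positivity
    · linarith
  have hθlt : theta n k < π/2 := by
    unfold theta
    rw [div_lt_iff₀ (by linarith)]
    have hkr : (k:ℝ) ≤ ((n:ℝ)-1)/2 := by
      have h1 : 2*k ≤ n - 1 := by omega
      have h2 : (2:ℝ)*k ≤ ((n-1:ℕ):ℝ) := by exact_mod_cast h1
      rw [Nat.cast_sub (by omega)] at h2
      push_cast at h2
      linarith
    have hπ := Real.pi_pos
    nlinarith
  have hsin : 0 < s := Real.sin_pos_of_pos_of_lt_pi hθpos (by linarith [Real.pi_pos])
  have hcos : 0 < c := Real.cos_pos_of_mem_Ioo ⟨by linarith [Real.pi_pos], hθlt⟩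
  have hΛpos : 0 < Λ := by
    rw [hΛ]
    have h1 : (0:ℝ) < ((n:ℝ)-1)^2 := by nlinarith
    exact mul_pos (mul_pos (mul_pos (by norm_num) h1) (pow_pos hsin 2)) (pow_pos hcos 2)
  have hΛne : Λ ≠ 0 := ne_of_gt hΛpos
  have hDΛ : D * Λ⁻¹ = μ k - μ k' := by
    have hD8 : D = (μ k - μ k') * Λ := by rw [hD, hΛ, hlamk1, hlamk2]; ring
    rw [hD8, mul_assoc, mul_inv_cancel₀ hΛne, mul_one]
  rw [hDΛ]
  funext i
  simp only [Pi.add_apply, Pi.sub_apply, Pi.smul_apply, smul_eq_mul]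
  linear_combination (-(μ k * vmode n k i) - μ k' * vmode n k' i) * hpyth
end

section
/- For all real x and weights ω₁ = 1, ω₂ = 1/2: 1 − 2(ω₁+ω₂)(sin⁴x + cos⁴x) + 4ω₁ω₂(sin⁶x + cos⁶x) = 0. Consequently, with two weighted-Jacobi pre-smoothing steps with weights 1 and 1/2, every eigenvalue of the two-grid iteration matrix for the 1D Poisson problem is zero, i.e., the two-grid method converges exactly in one iteration. -/
set_option maxHeartbeats 1000000


open Real Matrix

namespace TGaux


lemma sum_delta {m : ℕ} (c : ℕ) (h : c < m) (f : Fin m → ℝ) :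
    (∑ k : Fin m, if k.val = c then f k else 0) = f ⟨c, h⟩ := by
  rw [Finset.sum_eq_single (⟨c, h⟩ : Fin m)]
  · simp
  · intro b _ hb
    rw [if_neg]
    intro hc; exact hb (Fin.ext hc)
  · intro h'; exact absurd (Finset.mem_univ _) h'

noncomputable def Jm (n : ℕ) : Matrix (Fin (n-2)) (Fin (n-2)) ℝ :=
  Matrix.of fun i j => if i.val + 1 = j.val ∨ j.val + 1 = i.val then 1 else 0

noncomputable def Inm (n : ℕ) : Matrix (Fin (n-2)) (Fin ((n-3)/2)) ℝ :=
  Matrix.of fun i k => if i.val = 2 * k.val + 1 then 1 else 0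

noncomputable def Dm (n : ℕ) : Matrix (Fin (n-2)) (Fin (n-2)) ℝ :=
  Matrix.of fun i j => if i.val = j.val ∧ j.val % 2 = 1 then 1 else 0

noncomputable def Dif (n : ℕ) : Matrix (Fin (n-2+1)) (Fin (n-2)) ℝ :=
  Matrix.of fun i j => (if j.val = i.val then (1:ℝ) else 0) - (if j.val + 1 = i.val then 1 else 0)

lemma Jm_symm (n : ℕ) : (Jm n)ᵀ = Jm n := by
  ext i j
  simp only [Jm, transpose_apply, of_apply]
  split_ifs <;> first | (exfalso; omega) | rfl

lemma lap_eq (n : ℕ) :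
    lap n = ((n:ℝ)-1)^2 • ((2:ℝ) • (1 : Matrix (Fin (n-2)) (Fin (n-2)) ℝ) - Jm n) := by
  ext i j
  simp only [lap, Jm, of_apply, Matrix.smul_apply, Matrix.sub_apply, one_apply, smul_eq_mul, Fin.ext_iff]
  split_ifs <;> first | (exfalso; omega) | ring1

lemma h2P (n : ℕ) (hodd : Odd n) (hn : 3 ≤ n) :
    (2:ℝ) • interp n = Jm n * Inm n + (2:ℝ) • Inm n := by
  obtain ⟨t, ht⟩ := hodd
  ext i k
  have hk : k.val < (n-3)/2 := k.isLt
  have hlt : 2 * k.val + 1 < n - 2 := by omega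
  have hsum : (Jm n * Inm n) i k = Jm n i ⟨2*k.val+1, hlt⟩ := by
    rw [Matrix.mul_apply]
    rw [show (∑ m, Jm n i m * Inm n m k)
        = ∑ m : Fin (n-2), if m.val = 2*k.val+1 then Jm n i m else 0 by
      apply Finset.sum_congr rfl
      intro m _
      simp only [Inm, of_apply, mul_ite, mul_one, mul_zero]]
    exact sum_delta _ hlt _
  rw [Matrix.smul_apply, Matrix.add_apply, hsum, Matrix.smul_apply]
  have hi : i.val < n - 2 := i.isLt
  simp only [Jm, Inm, interp, of_apply, smul_eq_mul]
  split_ifs <;> first | (exfalso; omega) | norm_num1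

lemma InmT (n : ℕ) (hodd : Odd n) (hn : 3 ≤ n) : Inm n * (Inm n)ᵀ = Dm n := by
  obtain ⟨t, ht⟩ := hodd
  ext i j
  rw [Matrix.mul_apply]
  by_cases hij : i.val = j.val ∧ j.val % 2 = 1
  · have hlt : i.val / 2 < (n-3)/2 := by have := i.isLt; omega
    rw [show (∑ k, Inm n i k * (Inm n)ᵀ k j)
        = ∑ k : Fin ((n-3)/2), if k.val = i.val/2 then (1:ℝ) else 0 by
      apply Finset.sum_congr rfl
      intro k _
      simp only [Inm, transpose_apply, of_apply, ite_mul, mul_ite, one_mul, mul_one, mul_zero]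
      split_ifs <;> first | (exfalso; omega) | rfl]
    rw [sum_delta _ hlt _]
    simp only [Dm, of_apply, if_pos hij]
  · rw [Finset.sum_eq_zero, Dm, of_apply, if_neg hij]
    intro k _
    simp only [Inm, transpose_apply, of_apply, ite_mul, mul_ite, one_mul, mul_one, mul_zero]
    split_ifs <;> first | (exfalso; omega) | rfl

lemma JD (n : ℕ) : Jm n * Dm n + Dm n * Jm n = Jm n := by
  ext i j
  have h1 : (Jm n * Dm n) i j = if j.val % 2 = 1 then Jm n i j else 0 := by
    rw [Matrix.mul_apply]
    rw [show (∑ m, Jm n i m * Dm n m j)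
        = ∑ m : Fin (n-2), if m.val = j.val then (if j.val % 2 = 1 then Jm n i m else 0) else 0 by
      apply Finset.sum_congr rfl
      intro m _
      simp only [Dm, of_apply, mul_ite, mul_one, mul_zero]
      split_ifs <;> first | (exfalso; omega) | rfl]
    rw [sum_delta _ j.isLt]
  have h2 : (Dm n * Jm n) i j = if i.val % 2 = 1 then Jm n i j else 0 := by
    rw [Matrix.mul_apply]
    rw [show (∑ m, Dm n i m * Jm n m j)
        = ∑ m : Fin (n-2), if m.val = i.val then (if i.val % 2 = 1 then Jm n m j else 0) else 0 by
      apply Finset.sum_congr rfl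
      intro m _
      simp only [Dm, of_apply, ite_mul, one_mul, zero_mul]
      split_ifs <;> first | (exfalso; omega) | rfl]
    rw [sum_delta _ i.isLt]
  rw [Matrix.add_apply, h1, h2]
  simp only [Jm, of_apply]
  split_ifs <;> first | (exfalso; omega) | norm_num1

lemma DifT (n : ℕ) :
    (Dif n)ᵀ * Dif n = (2:ℝ) • (1 : Matrix (Fin (n-2)) (Fin (n-2)) ℝ) - Jm n := by
  ext i j
  rw [Matrix.mul_apply]
  have hi : i.val < n - 2 := i.isLt
  rw [show (∑ m : Fin (n-2+1), (Dif n)ᵀ i m * Dif n m j)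
      = ∑ m : Fin (n-2+1),
        ((if m.val = i.val then ((if i.val = j.val then (1:ℝ) else 0)
            - (if i.val = j.val + 1 then 1 else 0)) else 0)
         - (if m.val = i.val + 1 then ((if i.val + 1 = j.val then (1:ℝ) else 0)
            - (if i.val + 1 = j.val + 1 then 1 else 0)) else 0)) by
    apply Finset.sum_congr rfl
    intro m _
    simp only [Dif, transpose_apply, of_apply]
    split_ifs <;> first | (exfalso; omega) | ring1]
  rw [Finset.sum_sub_distrib, sum_delta i.val (by omega), sum_delta (i.val+1) (by omega)]
  simp only [Matrix.smul_apply, Matrix.sub_apply, one_apply, Jm, of_apply, smul_eq_mul, Fin.ext_iff]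
  split_ifs <;> first | (exfalso; omega) | ring1


lemma jacobi_eq (n : ℕ) (hn : 3 ≤ n) (ω : ℝ) :
    jacobi n ω = 1 - (ω/2) • ((2:ℝ) • (1 : Matrix (Fin (n-2)) (Fin (n-2)) ℝ) - Jm n) := by
  have h3 : (3:ℝ) ≤ (n:ℝ) := by exact_mod_cast hn
  have hK : ((n:ℝ)-1)^2 ≠ 0 := by nlinarith
  have h2K : (2*((n:ℝ)-1)^2) ≠ 0 := by nlinarith
  have hdiag : (Matrix.diagonal fun i : Fin (n-2) => lap n i i)
      = Matrix.diagonal (fun _ : Fin (n-2) => 2*((n:ℝ)-1)^2) := by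
    congr 1; funext i; simp [lap]; ring
  have hinv : (Matrix.diagonal (fun _ : Fin (n-2) => 2*((n:ℝ)-1)^2))⁻¹
      = Matrix.diagonal (fun _ : Fin (n-2) => (2*((n:ℝ)-1)^2)⁻¹) := by
    apply Matrix.inv_eq_right_inv
    rw [Matrix.diagonal_mul_diagonal]
    rw [show (fun i : Fin (n-2) => (2*((n:ℝ)-1)^2) * (2*((n:ℝ)-1)^2)⁻¹)
        = fun _ : Fin (n-2) => (1:ℝ) from funext fun i => mul_inv_cancel₀ h2K]
    exact Matrix.diagonal_one
  have hmul : Matrix.diagonal (fun _ : Fin (n-2) => (2*((n:ℝ)-1)^2)⁻¹) * lap n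
      = (2*((n:ℝ)-1)^2)⁻¹ • lap n := by
    ext i j
    rw [Matrix.diagonal_mul, Matrix.smul_apply, smul_eq_mul]
  rw [jacobi, hdiag, hinv, hmul, lap_eq]
  have hc : ∀ X : Matrix (Fin (n-2)) (Fin (n-2)) ℝ,
      ω • ((2*((n:ℝ)-1)^2)⁻¹ • (((n:ℝ)-1)^2 • X)) = (ω/2) • X := by
    intro X
    rw [smul_smul, smul_smul]
    congr 1
    rw [mul_assoc, mul_inv, mul_assoc, inv_mul_cancel₀ hK]
    ring
  rw [hc]

lemma smooth_eq (n : ℕ) (hn : 3 ≤ n) :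
    (8:ℝ) • (jacobi n 1 * jacobi n (1/2)) = (2:ℝ) • Jm n + Jm n * Jm n := by
  have e1 : (2:ℝ) • jacobi n 1 = Jm n := by rw [jacobi_eq n hn]; module
  have e2 : (4:ℝ) • jacobi n (1/2)
      = (2:ℝ) • (1 : Matrix (Fin (n-2)) (Fin (n-2)) ℝ) + Jm n := by
    rw [jacobi_eq n hn]; module
  have e3 : (8:ℝ) • (jacobi n 1 * jacobi n (1/2))
      = ((2:ℝ) • jacobi n 1) * ((4:ℝ) • jacobi n (1/2)) := by
    rw [smul_mul_assoc, mul_smul_comm, smul_smul]; norm_num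
  rw [e3, e1, e2, mul_add, mul_smul_comm, mul_one, add_comm]

lemma key_alg {N : ℕ} (J D : Matrix (Fin N) (Fin N) ℝ) (h : J*D + D*J = J) :
    J*(D*(J*J + (2:ℝ)•J)) + ((2:ℝ)•(D*(J*J+(2:ℝ)•J)) + J*(D*((4:ℝ)•1 - J*J)))
      = (2:ℝ)•((2:ℝ)•J + J*J) := by
  have hDJ : ∀ X : Matrix (Fin N) (Fin N) ℝ, D*(J*X) = J*X - J*(D*X) := by
    intro X
    have h2 : (J*D + D*J)*X = J*X := by rw [h]
    rw [add_mul, mul_assoc, mul_assoc] at h2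
    linear_combination (norm := abel) h2
  have hDJ0 : D*J = J - J*D := by linear_combination (norm := abel) h
  simp only [mul_add, add_mul, mul_sub, sub_mul, mul_smul_comm, smul_mul_assoc, mul_one, one_mul,
    mul_assoc, hDJ, hDJ0, smul_sub, smul_add, smul_smul]
  module

lemma decomp (n : ℕ) (hodd : Odd n) (hn : 3 ≤ n) :
    (16:ℝ) • (jacobi n 1 * jacobi n (1/2))
      = ((2:ℝ) • interp n) * ((Inm n)ᵀ * (Jm n * Jm n + (2:ℝ) • Jm n))
        + (Jm n * Inm n) * ((Inm n)ᵀ * ((4:ℝ) • 1 - Jm n * Jm n)) := by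
  have hIn : ∀ Y : Matrix (Fin (n-2)) (Fin (n-2)) ℝ,
      Inm n * ((Inm n)ᵀ * Y) = Dm n * Y := by
    intro Y; rw [← Matrix.mul_assoc, InmT n hodd hn]
  have h16 : (16:ℝ) • (jacobi n 1 * jacobi n (1/2))
      = (2:ℝ) • ((8:ℝ) • (jacobi n 1 * jacobi n (1/2))) := by
    rw [smul_smul]; norm_num
  rw [h16, smooth_eq n hn, h2P n hodd hn]
  simp only [Matrix.add_mul, Matrix.smul_mul, Matrix.mul_assoc, hIn]
  have hk := key_alg (Jm n) (Dm n) (JD n)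
  rw [← hk]
  abel

lemma coarseA_eq (n : ℕ) (hodd : Odd n) (hn : 3 ≤ n) :
    coarseA n = ((n:ℝ)-1)^2 • ((Dif n * interp n)ᵀ * (Dif n * interp n)) := by
  have hlap : lap n = ((n:ℝ)-1)^2 • ((Dif n)ᵀ * Dif n) := by rw [lap_eq, DifT]
  rw [coarseA, hlap]
  rw [Matrix.transpose_mul]
  simp only [Matrix.mul_smul, Matrix.smul_mul, Matrix.mul_assoc]

lemma P_inj (n : ℕ) (hodd : Odd n) (hn : 3 ≤ n) (x : Fin ((n-3)/2) → ℝ)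
    (hx : interp n *ᵥ x = 0) : x = 0 := by
  obtain ⟨t, ht⟩ := hodd
  funext k
  have hk : k.val < (n-3)/2 := k.isLt
  have hlt : 2*k.val+1 < n-2 := by omega
  have hrow := congrFun hx ⟨2*k.val+1, hlt⟩
  rw [Matrix.mulVec, dotProduct] at hrow
  rw [show (∑ j, interp n ⟨2*k.val+1, hlt⟩ j * x j)
      = ∑ j : Fin ((n-3)/2), if j.val = k.val then x j else 0 by
    apply Finset.sum_congr rfl
    intro j _
    simp only [interp, of_apply]
    split_ifs <;> first | (exfalso; omega) | ring1] at hrow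
  rw [sum_delta _ hk] at hrow
  exact hrow

lemma Dif_inj (n : ℕ) (w : Fin (n-2) → ℝ) (hw : Dif n *ᵥ w = 0) : w = 0 := by
  suffices h : ∀ v, ∀ hv : v < n-2, w ⟨v, hv⟩ = 0 by
    funext i; exact h i.val i.isLt
  intro v
  induction v using Nat.strong_induction_on with
  | _ v ih =>
    intro hv
    have hrow := congrFun hw ⟨v, by omega⟩
    rw [Matrix.mulVec, dotProduct] at hrow
    rw [show (∑ j, Dif n ⟨v, by omega⟩ j * w j)
        = ∑ j : Fin (n-2), ((if j.val = v then w j else 0)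
            - (if v = j.val + 1 then w j else 0)) by
      apply Finset.sum_congr rfl
      intro j _
      simp only [Dif, of_apply]
      split_ifs <;> first | (exfalso; omega) | ring1] at hrow
    rw [Finset.sum_sub_distrib, sum_delta _ hv] at hrow
    rcases Nat.eq_zero_or_pos v with h0 | h1
    · subst h0
      rw [Finset.sum_eq_zero (fun j _ => if_neg (by omega))] at hrow
      simpa using hrow
    · have hv1 : v - 1 < n - 2 := by omega
      rw [show (fun j : Fin (n-2) => if v = j.val + 1 then w j else 0)
          = fun j : Fin (n-2) => if j.val = v - 1 then w j else 0 from
        funext fun j => by split_ifs <;> first | (exfalso; omega) | rfl] at hrow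
      rw [sum_delta _ hv1, ih (v-1) (by omega) hv1] at hrow
      simpa using hrow

lemma coarseA_posDef (n : ℕ) (hodd : Odd n) (hn : 3 ≤ n) : (coarseA n).PosDef := by
  have h3 : (3:ℝ) ≤ (n:ℝ) := by exact_mod_cast hn
  have hK : (0:ℝ) < ((n:ℝ)-1)^2 := by nlinarith
  rw [coarseA_eq n hodd hn]
  rw [Matrix.posDef_iff_dotProduct_mulVec]
  constructor
  · show _ᴴ = _
    rw [Matrix.conjTranspose_eq_transpose_of_trivial, Matrix.transpose_smul,
      Matrix.transpose_mul, Matrix.transpose_transpose]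
  · intro x hx
    set Q := Dif n * interp n with hQ
    have hy : Q *ᵥ x ≠ 0 := by
      intro hy0
      apply hx
      apply P_inj n hodd hn
      apply Dif_inj n
      rwa [hQ, ← Matrix.mulVec_mulVec] at hy0
    have hrw : star x ⬝ᵥ ((((n:ℝ)-1)^2 • (Qᵀ * Q)) *ᵥ x)
        = ((n:ℝ)-1)^2 * ((Q *ᵥ x) ⬝ᵥ (Q *ᵥ x)) := by
      rw [Matrix.smul_mulVec, dotProduct_smul, ← Matrix.mulVec_mulVec,
        Matrix.dotProduct_mulVec, Matrix.vecMul_transpose, star_trivial, smul_eq_mul]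
    rw [hrw]
    have hpos : 0 < (Q *ᵥ x) ⬝ᵥ (Q *ᵥ x) := by
      have h := dotProduct_self_star_pos_iff (v := Q *ᵥ x) |>.mpr hy
      simpa [star_trivial] using h
    positivity

lemma coarseA_det (n : ℕ) (hodd : Odd n) (hn : 3 ≤ n) : IsUnit (coarseA n).det :=
  (Matrix.isUnit_iff_isUnit_det _).mp (coarseA_posDef n hodd hn).isUnit

lemma E1 (n : ℕ) (hodd : Odd n) (hn : 3 ≤ n) :
    (1 - interp n * (coarseA n)⁻¹ * (interp n)ᵀ * lap n) * interp n = 0 := by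
  rw [Matrix.sub_mul, Matrix.one_mul]
  have key : interp n * (coarseA n)⁻¹ * (interp n)ᵀ * lap n * interp n = interp n := by
    calc interp n * (coarseA n)⁻¹ * (interp n)ᵀ * lap n * interp n
        = interp n * ((coarseA n)⁻¹ * ((interp n)ᵀ * (lap n * interp n))) := by
          simp only [Matrix.mul_assoc]
      _ = interp n * ((coarseA n)⁻¹ * coarseA n) := by
          rw [coarseA, Matrix.mul_assoc]
      _ = interp n := by rw [Matrix.nonsing_inv_mul _ (coarseA_det n hodd hn), Matrix.mul_one]
  rw [key, sub_self]

lemma E2 (n : ℕ) (hodd : Odd n) (hn : 3 ≤ n) :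
    ((interp n)ᵀ * lap n) * (1 - interp n * (coarseA n)⁻¹ * (interp n)ᵀ * lap n) = 0 := by
  rw [Matrix.mul_sub, Matrix.mul_one]
  have key : ((interp n)ᵀ * lap n) * (interp n * (coarseA n)⁻¹ * (interp n)ᵀ * lap n)
      = (interp n)ᵀ * lap n := by
    calc ((interp n)ᵀ * lap n) * (interp n * (coarseA n)⁻¹ * (interp n)ᵀ * lap n)
        = (((interp n)ᵀ * lap n) * (interp n * (coarseA n)⁻¹ * (interp n)ᵀ)) * lap n := by
          rw [← Matrix.mul_assoc]
      _ = ((((interp n)ᵀ * lap n) * (interp n * (coarseA n)⁻¹)) * (interp n)ᵀ) * lap n := by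
          rw [← Matrix.mul_assoc ((interp n)ᵀ * lap n)]
      _ = (((((interp n)ᵀ * lap n) * interp n) * (coarseA n)⁻¹) * (interp n)ᵀ) * lap n := by
          rw [← Matrix.mul_assoc ((interp n)ᵀ * lap n)]
      _ = ((coarseA n * (coarseA n)⁻¹) * (interp n)ᵀ) * lap n := rfl
      _ = ((1 : Matrix (Fin ((n-3)/2)) (Fin ((n-3)/2)) ℝ) * (interp n)ᵀ) * lap n := by
          rw [Matrix.mul_nonsing_inv _ (coarseA_det n hodd hn)]
      _ = (interp n)ᵀ * lap n := by rw [Matrix.one_mul]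
  rw [key, sub_self]

lemma Tws (n : ℕ) (hodd : Odd n) (hn : 3 ≤ n) :
    (Inm n)ᵀ * ((4:ℝ) • 1 - Jm n * Jm n)
      = ((2:ℝ)/((n:ℝ)-1)^2) • ((interp n)ᵀ * lap n) := by
  have h3 : (3:ℝ) ≤ (n:ℝ) := by exact_mod_cast hn
  have hK : ((n:ℝ)-1)^2 ≠ 0 := by nlinarith
  have hPt : (2:ℝ) • (interp n)ᵀ = (Inm n)ᵀ * Jm n + (2:ℝ) • (Inm n)ᵀ := by
    rw [← Matrix.transpose_smul, h2P n hodd hn]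
    rw [Matrix.transpose_add, Matrix.transpose_mul, Jm_symm, Matrix.transpose_smul]
  have hmain : ((Inm n)ᵀ * Jm n + (2:ℝ) • (Inm n)ᵀ)
        * ((2:ℝ) • (1 : Matrix (Fin (n-2)) (Fin (n-2)) ℝ) - Jm n)
      = (Inm n)ᵀ * ((4:ℝ) • 1 - Jm n * Jm n) := by
    simp only [Matrix.mul_sub, Matrix.sub_mul, Matrix.add_mul, Matrix.mul_add,
      Matrix.mul_smul, Matrix.smul_mul, Matrix.mul_assoc, Matrix.mul_one, Matrix.one_mul,
      smul_sub, smul_add, smul_smul]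
    module
  have h2 : (2:ℝ) • ((interp n)ᵀ * lap n)
      = ((n:ℝ)-1)^2 • ((Inm n)ᵀ * ((4:ℝ) • 1 - Jm n * Jm n)) := by
    calc (2:ℝ) • ((interp n)ᵀ * lap n)
        = (2:ℝ) • ((interp n)ᵀ * (((n:ℝ)-1)^2 • ((2:ℝ) • 1 - Jm n))) := by rw [lap_eq]
      _ = (2:ℝ) • (((n:ℝ)-1)^2 • ((interp n)ᵀ * ((2:ℝ) • 1 - Jm n))) := by
          rw [Matrix.mul_smul]
      _ = ((n:ℝ)-1)^2 • (((2:ℝ) • (interp n)ᵀ) * ((2:ℝ) • 1 - Jm n)) := by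
          rw [smul_comm, ← Matrix.smul_mul]
      _ = ((n:ℝ)-1)^2 • (((Inm n)ᵀ * Jm n + (2:ℝ) • (Inm n)ᵀ) * ((2:ℝ) • 1 - Jm n)) := by
          rw [hPt]
      _ = ((n:ℝ)-1)^2 • ((Inm n)ᵀ * ((4:ℝ) • 1 - Jm n * Jm n)) := by rw [hmain]
  calc (Inm n)ᵀ * ((4:ℝ) • 1 - Jm n * Jm n)
      = (((n:ℝ)-1)^2)⁻¹ • (((n:ℝ)-1)^2 • ((Inm n)ᵀ * ((4:ℝ) • 1 - Jm n * Jm n))) := by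
        rw [smul_smul, inv_mul_cancel₀ hK, one_smul]
    _ = (((n:ℝ)-1)^2)⁻¹ • ((2:ℝ) • ((interp n)ᵀ * lap n)) := by rw [h2]
    _ = ((2:ℝ)/((n:ℝ)-1)^2) • ((interp n)ᵀ * lap n) := by
        rw [smul_smul, div_eq_mul_inv, mul_comm]

lemma PiSPi (n : ℕ) (hodd : Odd n) (hn : 3 ≤ n) :
    ((1 - interp n * (coarseA n)⁻¹ * (interp n)ᵀ * lap n) * (jacobi n 1 * jacobi n (1/2)))
      * (1 - interp n * (coarseA n)⁻¹ * (interp n)ᵀ * lap n) = 0 := by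
  set Pi := 1 - interp n * (coarseA n)⁻¹ * (interp n)ᵀ * lap n with hPi
  set S := jacobi n 1 * jacobi n (1/2) with hSdef
  have hE1 : Pi * interp n = 0 := by rw [hPi]; exact E1 n hodd hn
  have hE2 : ((interp n)ᵀ * lap n) * Pi = 0 := by rw [hPi]; exact E2 n hodd hn
  have hW : ((Inm n)ᵀ * ((4:ℝ) • 1 - Jm n * Jm n)) * Pi = 0 := by
    rw [Tws n hodd hn, Matrix.smul_mul, hE2, smul_zero]
  have h16 : (16:ℝ) • ((Pi * S) * Pi) = Pi * ((16:ℝ) • S) * Pi := by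
    rw [mul_smul_comm, Matrix.smul_mul]
  have hz : Pi * ((16:ℝ) • S) * Pi = 0 := by
    rw [hSdef, decomp n hodd hn, Matrix.mul_add, Matrix.add_mul]
    have hz1 : Pi * (((2:ℝ) • interp n) * ((Inm n)ᵀ * (Jm n * Jm n + (2:ℝ) • Jm n))) = 0 := by
      rw [← Matrix.mul_assoc, Matrix.mul_smul, hE1, smul_zero, Matrix.zero_mul]
    have hz2 : (Pi * ((Jm n * Inm n) * ((Inm n)ᵀ * ((4:ℝ) • 1 - Jm n * Jm n)))) * Pi = 0 := by
      rw [Matrix.mul_assoc, Matrix.mul_assoc, hW, Matrix.mul_zero, Matrix.mul_zero]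
    rw [hz1, Matrix.zero_mul, zero_add, hz2]
  have hfin : (16:ℝ) • ((Pi * S) * Pi) = 0 := h16.trans hz
  have h16ne : (16:ℝ) ≠ 0 := by norm_num
  exact (smul_eq_zero.mp hfin).resolve_left h16ne

lemma MM_zero (n : ℕ) (hodd : Odd n) (hn : 3 ≤ n) :
    twogrid n (jacobi n 1 * jacobi n (1/2)) * twogrid n (jacobi n 1 * jacobi n (1/2)) = 0 := by
  rw [twogrid]
  rw [show ∀ A B : Matrix (Fin (n-2)) (Fin (n-2)) ℝ, (A * B) * (A * B) = ((A * B) * A) * B from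
    fun A B => by simp only [Matrix.mul_assoc]]
  rw [PiSPi n hodd hn, Matrix.zero_mul]

end TGaux

theorem twogrid_exact_solver (n : ℕ) (hodd : Odd n) (hn : 3 ≤ n) :
    (∀ x : ℝ, 1 - 2 * ((1:ℝ) + 1/2) * (Real.sin x ^ 4 + Real.cos x ^ 4)
        + 4 * 1 * (1/2) * (Real.sin x ^ 6 + Real.cos x ^ 6) = 0) ∧
    (∀ μ ∈ spectrum ℝ (twogrid n (jacobi n 1 * jacobi n (1/2))), μ = 0) := by
  constructor
  · intro x
    have h := Real.sin_sq_add_cos_sq x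
    linear_combination (2*(Real.sin x^2 + Real.cos x^2)^2 - (Real.sin x^2 + Real.cos x^2)
      - 1 - 6*(Real.sin x^2 * Real.cos x^2)) * h
  · intro μ hμ
    by_contra hne
    rw [spectrum.mem_iff] at hμ
    apply hμ
    set M := twogrid n (jacobi n 1 * jacobi n (1/2)) with hM
    have hMM : M * M = 0 := TGaux.MM_zero n hodd hn
    have hμμ : μ * μ ≠ 0 := mul_ne_zero hne hne
    have expand1 : (μ • (1 : Matrix (Fin (n-2)) (Fin (n-2)) ℝ) - M) * (μ • 1 + M)
        = (μ*μ) • 1 := by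
      simp only [Matrix.sub_mul, Matrix.add_mul, Matrix.mul_add, Matrix.mul_sub,
        Matrix.smul_mul, Matrix.mul_smul, Matrix.one_mul, Matrix.mul_one, hMM, smul_smul]
      module
    have expand2 : (μ • (1 : Matrix (Fin (n-2)) (Fin (n-2)) ℝ) + M) * (μ • 1 - M)
        = (μ*μ) • 1 := by
      simp only [Matrix.sub_mul, Matrix.add_mul, Matrix.mul_add, Matrix.mul_sub,
        Matrix.smul_mul, Matrix.mul_smul, Matrix.one_mul, Matrix.mul_one, hMM, smul_smul]
      module
    have e1 : (algebraMap ℝ (Matrix (Fin (n-2)) (Fin (n-2)) ℝ) μ - M)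
        * ((μ*μ)⁻¹ • (algebraMap ℝ (Matrix (Fin (n-2)) (Fin (n-2)) ℝ) μ + M)) = 1 := by
      rw [Algebra.algebraMap_eq_smul_one, Matrix.mul_smul, expand1, smul_smul,
        inv_mul_cancel₀ hμμ, one_smul]
    have e2 : ((μ*μ)⁻¹ • (algebraMap ℝ (Matrix (Fin (n-2)) (Fin (n-2)) ℝ) μ + M))
        * (algebraMap ℝ (Matrix (Fin (n-2)) (Fin (n-2)) ℝ) μ - M) = 1 := by
      rw [Algebra.algebraMap_eq_smul_one, Matrix.smul_mul, expand2, smul_smul,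
        inv_mul_cancel₀ hμμ, one_smul]
    exact ⟨⟨_, _, e1, e2⟩, rfl⟩
end
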